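/- Let x : (0,∞) → ℝ be twice differentiable and satisfy the Euler–Lagrange equation x'(t) + t·x''(t) = 0 for all t > 0 (the Euler–Lagrange equation of the Lagrangian L(t,x,v) = t·v²). Then the function t ↦ x(t)·t·x'(t) − t²·(x'(t))²·ln t is constant on (0,∞). -/

import Mathlib

/-!
Along any curve, the derivative of the Noether charge `x·t·y − t²·y²·ln t` (with `y = x'`)
factors as `(x − 2 t ln t · x') · (x' + t x'')`: the characteristic of the symmetry
`(T, X) = (2 t ln t, x)` times the Euler–Lagrange expression of `L = t v²`. On solutions the
charge therefore has zero derivative on the connected open set `(0, ∞)`, hence is constant.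
-/

open Real Set

/-- The Noether charge of `L(t, x, v) = t v²` for the symmetry `(T, X) = (2 t ln t, x)`;
`y` stands for the velocity `x'`. -/
noncomputable def noetherCharge (x y : ℝ → ℝ) (t : ℝ) : ℝ :=
  x t * t * y t - t ^ 2 * y t ^ 2 * log t

theorem hasDerivAt_noetherCharge {x y : ℝ → ℝ} {t a : ℝ} (ht : t ≠ 0)
    (hx : HasDerivAt x (y t) t) (hy : HasDerivAt y a t) :
    HasDerivAt (noetherCharge x y) ((x t - 2 * t * log t * y t) * (y t + t * a)) t := by
  have hcharge := ((hx.mul (hasDerivAt_id t)).mul hy).sub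
    (((hasDerivAt_pow 2 t).mul (hy.pow 2)).mul (hasDerivAt_log ht))
  refine hcharge.congr_deriv ?_
  simp only [Pi.mul_apply, Pi.pow_apply, id, Nat.cast_ofNat]
  field_simp
  ring

theorem hasDerivAt_noetherCharge_of_eulerLagrange {x : ℝ → ℝ} {t : ℝ} (ht : t ≠ 0)
    (hx : DifferentiableAt ℝ x t) (hx' : DifferentiableAt ℝ (deriv x) t)
    (hode : deriv x t + t * deriv (deriv x) t = 0) :
    HasDerivAt (noetherCharge x (deriv x)) 0 t := by
  simpa [hode] using hasDerivAt_noetherCharge ht hx.hasDerivAt hx'.hasDerivAt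

/-- Conservation law for the Lagrangian `L(t,x,v) = t·v²` (Example 1):
along solutions of `x' + t·x'' = 0` on `(0,∞)`, the quantity
`x·t·x' − t²·(x')²·ln t` is constant. -/
theorem stmt_10 (x : ℝ → ℝ)
    (hx : ∀ t ∈ Set.Ioi (0:ℝ), DifferentiableAt ℝ x t)
    (hx' : ∀ t ∈ Set.Ioi (0:ℝ), DifferentiableAt ℝ (deriv x) t)
    (hode : ∀ t ∈ Set.Ioi (0:ℝ), deriv x t + t * deriv (deriv x) t = 0) :
    ∃ c : ℝ, ∀ t ∈ Set.Ioi (0:ℝ),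
      x t * t * deriv x t - t ^ 2 * (deriv x t) ^ 2 * Real.log t = c := by
  have hcharge : ∀ t ∈ Ioi (0 : ℝ), HasDerivAt (noetherCharge x (deriv x)) 0 t :=
    fun t ht => hasDerivAt_noetherCharge_of_eulerLagrange (ne_of_gt ht) (hx t ht) (hx' t ht)
      (hode t ht)
  exact isOpen_Ioi.exists_is_const_of_deriv_eq_zero isPreconnected_Ioi
    (fun t ht => (hcharge t ht).differentiableAt.differentiableWithinAt)
    (fun t ht => (hcharge t ht).deriv)
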